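/- arXiv:2311.13593 — 2 statements merged into one kernel-verified Lean document; each statement's English description precedes it below -/
import Mathlib

section
/- Let $\hat{W}$ be the Weyl group of a simply laced root system with simple reflections indexed by $I$, and let a finite group $G$ act on the Dynkin diagram (hence on $I$ and on $\hat{W}$ by permuting simple reflections and conjugation). Then the set of elements of $\hat{W}$ that preserve the fixed subspace $\mathfrak{h} = \hat{\mathfrak{h}}^G$ of the Cartan subalgebra is exactly the fixed subgroup $W = \hat{W}^G$. -/
/-!
Let `ρ` be the vector with `B ρ (α k) = 1` for every `k`. It exists and is unique because `B` is
nondegenerate: a vector orthogonal to all simple roots is fixed by the finite reflection group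
`W`, and a finite linear group containing an element negating each basis vector fixes no nonzero
vector. By uniqueness every diagram automorphism fixes `ρ`, so `ρ ∈ 𝔥`. If `w` preserves `𝔥`,
then `w⁻¹ (g w g⁻¹) ∈ W` fixes `ρ` for each `g ∈ G`, and the only element of `W` fixing `ρ` is
the identity, by the positivity theorem for roots: if `ℓ(w s) > ℓ(w)` then `w (α_s) > 0`.
-/

open Set

section WordLength

variable {M : Type*} [Monoid M] {T S : Set M} {m m' t : M}

-- `sInf ∅ = 0`: the value is `0` when `m ∉ Submonoid.closure T`.
noncomputable def wordLength (T : Set M) (m : M) : ℕ :=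
  sInf {n | ∃ l : List M, (∀ x ∈ l, x ∈ T) ∧ l.prod = m ∧ l.length = n}

lemma wordLength_prod_le {l : List M} (hl : ∀ x ∈ l, x ∈ T) : wordLength T l.prod ≤ l.length :=
  Nat.sInf_le ⟨l, hl, rfl, rfl⟩

lemma exists_length_eq_wordLength (hm : m ∈ Submonoid.closure T) :
    ∃ l : List M, (∀ x ∈ l, x ∈ T) ∧ l.prod = m ∧ l.length = wordLength T m := by
  obtain ⟨l, hl, rfl⟩ := Submonoid.exists_list_of_mem_closure hm
  exact Nat.sInf_mem (s := {n | ∃ l : List M, (∀ x ∈ l, x ∈ T) ∧ l.prod = _ ∧ l.length = n})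
    ⟨l.length, l, hl, rfl, rfl⟩

lemma wordLength_mul_le (hST : S ⊆ T) (hm : m ∈ Submonoid.closure T)
    (hm' : m' ∈ Submonoid.closure S) :
    wordLength T (m * m') ≤ wordLength T m + wordLength S m' := by
  obtain ⟨l, hl, rfl, hlen⟩ := exists_length_eq_wordLength hm
  obtain ⟨l', hl', rfl, hlen'⟩ := exists_length_eq_wordLength hm'
  rw [← hlen, ← hlen', ← List.length_append, ← List.prod_append]
  exact wordLength_prod_le (List.forall_mem_append.mpr ⟨hl, fun x hx => hST (hl' x hx)⟩)

lemma wordLength_le_one (ht : t ∈ T) : wordLength T t ≤ 1 := by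
  simpa using wordLength_prod_le (T := T) (l := [t]) (by simpa)

lemma wordLength_mul_le_one_add (hm : m ∈ Submonoid.closure T) (ht : t ∈ T) :
    wordLength T (t * m) ≤ 1 + wordLength T m :=
  (wordLength_mul_le le_rfl (Submonoid.subset_closure ht) hm).trans (by grw [wordLength_le_one ht])

lemma exists_wordLength_mul_lt (hT : ∀ t ∈ T, t * t = 1) (hm : m ∈ Submonoid.closure T)
    (h1 : m ≠ 1) : ∃ t ∈ T, wordLength T (m * t) < wordLength T m := by
  obtain ⟨l, hl, rfl, hlen⟩ := exists_length_eq_wordLength hm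
  rcases l.eq_nil_or_concat' with rfl | ⟨l, t, rfl⟩
  · exact absurd List.prod_nil h1
  have ht : t ∈ T := hl t (by simp)
  refine ⟨t, ht, ?_⟩
  have hprod : (l ++ [t]).prod * t = l.prod := by simp [mul_assoc, hT t ht]
  rw [hprod, ← hlen]
  exact (wordLength_prod_le fun x hx => hl x (by simp [hx])).trans_lt (by simp)

section Dihedral

variable {a b m : M} (ha : a * a = 1) (hb : b * b = 1)
include ha hb

lemma eq_one_or_eq_or_exists_of_wordLength_le_mul (hm : m ∈ Submonoid.closure {a, b})
    (hlen : wordLength {a, b} m ≤ wordLength {a, b} (m * a)) :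
    m = 1 ∨ m = b ∨ ∃ l : List M, (∀ x ∈ l, x ∈ ({a, b} : Set M)) ∧ m = l.prod * (a * b) ∧
      wordLength {a, b} m = l.length + 2 := by
  obtain ⟨l, hl, rfl, hlen'⟩ := exists_length_eq_wordLength hm
  rcases l.eq_nil_or_concat' with rfl | ⟨l, x, rfl⟩
  · exact .inl List.prod_nil
  have hl' : ∀ y ∈ l, y ∈ ({a, b} : Set M) := fun y hy => hl y (by simp [hy])
  rcases hl x (by simp) with rfl | rfl
  · have := wordLength_prod_le hl'
    simp only [List.prod_append, List.prod_singleton, mul_assoc, ha, mul_one,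
      List.length_append, List.length_singleton] at hlen hlen'
    omega
  rcases l.eq_nil_or_concat' with rfl | ⟨l, y, rfl⟩
  · exact .inr (.inl (by simp))
  have hl'' : ∀ z ∈ l, z ∈ ({a, x} : Set M) := fun z hz => hl' z (by simp [hz])
  rcases hl' y (by simp) with rfl | rfl
  · refine .inr (.inr ⟨l, hl'', by simp, ?_⟩)
    simpa using hlen'.symm
  · have := wordLength_prod_le hl''
    simp only [List.prod_append, List.prod_singleton, mul_assoc, hb, mul_one,
      List.length_append, List.length_singleton] at hlen'
    omega

lemma eq_one_or_eq_of_wordLength_le_mul (hab : a * b * a = b)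
    (hm : m ∈ Submonoid.closure {a, b})
    (hlen : wordLength {a, b} m ≤ wordLength {a, b} (m * a)) : m = 1 ∨ m = b := by
  obtain h | h | ⟨l, hl, rfl, hlen'⟩ := eq_one_or_eq_or_exists_of_wordLength_le_mul ha hb hm hlen
  · exact .inl h
  · exact .inr h
  have hshort : l.prod * (a * b) * a = (l ++ [b]).prod := by
    rw [List.prod_append, List.prod_singleton, mul_assoc, hab]
  have := wordLength_prod_le (T := {a, b}) (l := l ++ [b])
    (List.forall_mem_append.mpr ⟨hl, by simp⟩)
  rw [← hshort, List.length_append, List.length_singleton] at this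
  omega

lemma eq_one_or_eq_or_eq_of_wordLength_le_mul (hab : a * b * a = b * a * b)
    (hm : m ∈ Submonoid.closure {a, b})
    (hlen : wordLength {a, b} m ≤ wordLength {a, b} (m * a)) :
    m = 1 ∨ m = b ∨ m = a * b := by
  obtain h | h | ⟨l, hl, rfl, hlen'⟩ := eq_one_or_eq_or_exists_of_wordLength_le_mul ha hb hm hlen
  · exact .inl h
  · exact .inr (.inl h)
  rcases l.eq_nil_or_concat' with rfl | ⟨l, x, rfl⟩
  · simp
  have hl' : ∀ y ∈ l, y ∈ ({a, b} : Set M) := fun y hy => hl y (by simp [hy])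
  rw [List.length_append, List.length_singleton] at hlen'
  rcases hl x (by simp) with rfl | rfl
  · have hshort : (l ++ [x]).prod * (x * b) = (l ++ [b]).prod := by
      simp [← mul_assoc, mul_assoc _ x x, ha]
    have := wordLength_prod_le (T := {x, b}) (l := l ++ [b])
      (List.forall_mem_append.mpr ⟨hl', by simp⟩)
    rw [← hshort, List.length_append, List.length_singleton] at this
    omega
  · have hshort : (l ++ [x]).prod * (a * x) * a = (l ++ [a, x]).prod := by
      have hab' : a * (x * a) = x * (a * x) := by simpa only [mul_assoc] using hab
      have hx : ∀ y, x * (x * y) = y := fun y => by rw [← mul_assoc, hb, one_mul]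
      simp only [List.prod_append, List.prod_cons, List.prod_nil, mul_one, mul_assoc, hab', hx]
    have := wordLength_prod_le (T := {a, x}) (l := l ++ [a, x])
      (List.forall_mem_append.mpr ⟨hl', by simp⟩)
    rw [← hshort, List.length_append] at this
    simp only [List.length_cons, List.length_nil] at this
    omega

end Dihedral

-- `v` is taken of minimal length among all such factorizations `w = v * u`.
lemma exists_mul_eq_of_wordLength_mul_lt {w k : M} (hT : ∀ t ∈ T, t * t = 1) (hST : S ⊆ T)
    (hw : w ∈ Submonoid.closure T) (hk : k ∈ S)
    (hwk : wordLength T (w * k) < wordLength T w) :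
    ∃ v ∈ Submonoid.closure T, ∃ u ∈ Submonoid.closure S, v * u = w ∧
      wordLength T v + wordLength S u = wordLength T w ∧ wordLength T v < wordLength T w ∧
      ∀ k ∈ S, wordLength T v ≤ wordLength T (v * k) := by
  set A := {v | v ∈ Submonoid.closure T ∧ ∃ u ∈ Submonoid.closure S, v * u = w ∧
    wordLength T v + wordLength S u = wordLength T w}
  have hstep {v k : M} (hvA : v ∈ A) (hk : k ∈ S)
      (hvk : wordLength T (v * k) < wordLength T v) : v * k ∈ A := by
    obtain ⟨hv, u, hu, hvu, hlen⟩ := hvA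
    have hkT := hST hk
    have hvk_mem : v * k ∈ Submonoid.closure T := mul_mem hv (Submonoid.subset_closure hkT)
    have hku_mem : k * u ∈ Submonoid.closure S := mul_mem (Submonoid.subset_closure hk) hu
    have hw_eq : v * k * (k * u) = w := by rw [mul_assoc, ← mul_assoc k, hT k hkT, one_mul, hvu]
    have h1 := hw_eq ▸ wordLength_mul_le hST hvk_mem hku_mem
    have h2 := wordLength_mul_le_one_add hu hk
    exact ⟨hvk_mem, k * u, hku_mem, hw_eq, by omega⟩
  have hwA : w ∈ A := ⟨hw, 1, one_mem _, mul_one w, by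
    simpa using wordLength_prod_le (T := S) (l := []) (by simp)⟩
  obtain ⟨v, hvA, hmin⟩ := (measure (wordLength T)).wf.has_min A ⟨_, hstep hwA hk hwk⟩
  obtain ⟨hv, u, hu, hvu, hlen⟩ := id hvA
  refine ⟨v, hv, u, hu, hvu, hlen, (not_lt.mp (hmin _ (hstep hwA hk hwk))).trans_lt hwk,
    fun k hk => not_lt.mp fun hvk => hmin _ (hstep hvA hk hvk) hvk⟩

end WordLength

section Reflections

variable {R H I : Type*} [CommRing R] [AddCommGroup H] [Module R H]
  {α : I → H} {B : LinearMap.BilinForm R H} {s : I → H ≃ₗ[R] H}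

lemma reflection_apply_root (hs : ∀ i x, s i x = x - B x (α i) • α i)
    (hdiag : ∀ i, B (α i) (α i) = 2) (i : I) : s i (α i) = -α i := by
  rw [hs, hdiag]; module

lemma reflection_mul_self (hs : ∀ i x, s i x = x - B x (α i) • α i)
    (hdiag : ∀ i, B (α i) (α i) = 2) (i : I) : s i * s i = 1 := by
  ext x
  simp only [LinearEquiv.mul_apply, LinearEquiv.coe_one, id, hs i, map_sub,
    map_smul, LinearMap.sub_apply, LinearMap.smul_apply, smul_eq_mul, hdiag]
  module

lemma reflection_conj_of_orthogonal (hs : ∀ i x, s i x = x - B x (α i) • α i)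
    (hdiag : ∀ i, B (α i) (α i) = 2) {i j : I} (hij : B (α i) (α j) = 0)
    (hji : B (α j) (α i) = 0) : s i * s j * s i = s j := by
  ext x
  simp only [LinearEquiv.mul_apply, hs i, hs j, map_sub,
    map_smul, LinearMap.sub_apply, LinearMap.smul_apply, smul_eq_mul, hdiag, hij, hji]
  module

lemma reflection_braid (hs : ∀ i x, s i x = x - B x (α i) • α i)
    (hdiag : ∀ i, B (α i) (α i) = 2) {i j : I} (hij : B (α i) (α j) = -1)
    (hji : B (α j) (α i) = -1) : s i * s j * s i = s j * s i * s j := by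
  ext x
  simp only [LinearEquiv.mul_apply, hs i, hs j, map_sub,
    map_smul, LinearMap.sub_apply, LinearMap.smul_apply, smul_eq_mul, hdiag, hij, hji]
  module

lemma bilin_reflection_apply_reflection_apply (hs : ∀ i x, s i x = x - B x (α i) • α i)
    (hdiag : ∀ i, B (α i) (α i) = 2) (hsymm : ∀ x y, B x y = B y x) (k : I) (x y : H) :
    B (s k x) (s k y) = B x y := by
  simp only [hs k, map_sub, map_smul, LinearMap.sub_apply, LinearMap.smul_apply, smul_eq_mul,
    hdiag, hsymm (α k) y]
  ring

lemma mem_submonoidClosure_of_mem_closure (hs : ∀ i x, s i x = x - B x (α i) • α i)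
    (hdiag : ∀ i, B (α i) (α i) = 2) {u : H ≃ₗ[R] H} (hu : u ∈ Subgroup.closure (range s)) :
    u ∈ Submonoid.closure (range s) := by
  rwa [← Subgroup.closure_toSubmonoid_of_isOfFinOrder (forall_mem_range.2 fun i =>
    isOfFinOrder_iff_pow_eq_one.2 ⟨2, two_pos, by rw [sq, reflection_mul_self hs hdiag]⟩)]

lemma bilin_apply_apply_of_mem_closure (hs : ∀ i x, s i x = x - B x (α i) • α i)
    (hdiag : ∀ i, B (α i) (α i) = 2) (hsymm : ∀ x y, B x y = B y x) {u : H ≃ₗ[R] H}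
    (hu : u ∈ Submonoid.closure (range s)) (x y : H) : B (u x) (u y) = B x y := by
  induction hu using Submonoid.closure_induction generalizing x y with
  | mem _ h =>
    obtain ⟨k, rfl⟩ := h
    exact bilin_reflection_apply_reflection_apply hs hdiag hsymm k x y
  | one => rfl
  | mul u v _ _ hu hv => exact (hu (v x) (v y)).trans (hv x y)

lemma apply_root_mem_closure_pair_of_wordLength_le (hs : ∀ i x, s i x = x - B x (α i) • α i)
    (hdiag : ∀ i, B (α i) (α i) = 2) (hsymm : ∀ x y, B x y = B y x)
    (hoff : ∀ i j, i ≠ j → B (α i) (α j) = 0 ∨ B (α i) (α j) = -1) {i j : I} (hij : i ≠ j)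
    {u : H ≃ₗ[R] H} (hu : u ∈ Submonoid.closure {s i, s j})
    (hlen : wordLength {s i, s j} u ≤ wordLength {s i, s j} (u * s i)) :
    u (α i) ∈ AddSubmonoid.closure {α i, α j} := by
  have hi : α i ∈ AddSubmonoid.closure {α i, α j} := AddSubmonoid.subset_closure (by simp)
  have hj : α j ∈ AddSubmonoid.closure {α i, α j} := AddSubmonoid.subset_closure (by simp)
  have hii := reflection_mul_self hs hdiag i
  have hjj := reflection_mul_self hs hdiag j
  rcases hoff i j hij with h0 | h1
  · have h0' : B (α j) (α i) = 0 := (hsymm _ _).trans h0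
    rcases eq_one_or_eq_of_wordLength_le_mul hii hjj
      (reflection_conj_of_orthogonal hs hdiag h0 h0') hu hlen with rfl | rfl
    · exact hi
    · rwa [hs, h0, zero_smul, sub_zero]
  · have h1' : B (α j) (α i) = -1 := (hsymm _ _).trans h1
    have hji : s j (α i) = α i + α j := by rw [hs, h1]; module
    rcases eq_one_or_eq_or_eq_of_wordLength_le_mul hii hjj
      (reflection_braid hs hdiag h1 h1') hu hlen with rfl | rfl | rfl
    · exact hi
    · rw [hji]; exact add_mem hi hj
    · rw [LinearEquiv.mul_apply, hji, map_add, reflection_apply_root hs hdiag, hs, h1']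
      convert hj using 1
      module

/-- Humphreys, *Reflection Groups and Coxeter Groups*, Theorem 5.4. Factoring `w = v * u` with
`u` in the rank-two subgroup `⟨s i, s j⟩` reduces it, by induction on the length, to the
dihedral groups of order 4 and 6. -/
theorem apply_root_mem_closure_of_wordLength_le (hs : ∀ i x, s i x = x - B x (α i) • α i)
    (hdiag : ∀ i, B (α i) (α i) = 2) (hsymm : ∀ x y, B x y = B y x)
    (hoff : ∀ i j, i ≠ j → B (α i) (α j) = 0 ∨ B (α i) (α j) = -1) {w : H ≃ₗ[R] H}
    (hw : w ∈ Submonoid.closure (range s)) {i : I}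
    (hlen : wordLength (range s) w ≤ wordLength (range s) (w * s i)) :
    w (α i) ∈ AddSubmonoid.closure (range α) := by
  induction hn : wordLength (range s) w using Nat.strong_induction_on generalizing w i with
  | _ n ih =>
  have hinv : ∀ t ∈ range s, t * t = 1 := forall_mem_range.2 (reflection_mul_self hs hdiag)
  by_cases h1 : w = 1
  · subst h1; exact AddSubmonoid.subset_closure (mem_range_self i)
  obtain ⟨_, ⟨j, rfl⟩, hj⟩ := exists_wordLength_mul_lt hinv hw h1
  have hij : i ≠ j := by rintro rfl; omega
  have hS : {s i, s j} ⊆ range s := by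
    rintro _ (rfl | rfl) <;> exact mem_range_self _
  obtain ⟨v, hv, u, hu, rfl, hvu, hvw, hvmin⟩ :=
    exists_mul_eq_of_wordLength_mul_lt hinv hS hw (by simp) hj
  have hvα : {α i, α j} ⊆ ((AddSubmonoid.closure (range α)).comap (v : H →+ H) : Set H) := by
    rintro _ (rfl | rfl) <;> exact ih _ (hn ▸ hvw) hv (hvmin _ (by simp)) rfl
  have hui : wordLength {s i, s j} u ≤ wordLength {s i, s j} (u * s i) := by
    by_contra! hlt
    have := wordLength_mul_le hS hv (mul_mem hu (Submonoid.subset_closure (mem_insert _ _)))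
    rw [← mul_assoc] at this
    omega
  rw [LinearEquiv.mul_apply]
  exact AddSubmonoid.closure_le.2 hvα
    (apply_root_mem_closure_pair_of_wordLength_le hs hdiag hsymm hoff hij hu hui)

lemma exists_bilin_eq_natCast {x : H} (hx : ∀ k, B x (α k) = 1) {v : H}
    (hv : v ∈ AddSubmonoid.closure (range α)) : ∃ n : ℕ, B x v = n := by
  induction hv using AddSubmonoid.closure_induction with
  | mem _ h => obtain ⟨k, rfl⟩ := h; exact ⟨1, by simp [hx]⟩
  | zero => exact ⟨0, by simp⟩
  | add _ _ _ _ hv hw =>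
    obtain ⟨n, hn⟩ := hv
    obtain ⟨m, hm⟩ := hw
    exact ⟨n + m, by simp [hn, hm]⟩

/-- A nontrivial `u` has a right descent `s j`, so `u (α j)` is the negative of a nonnegative
integer combination of the `α k`; but `B x (u (α j)) = B (u x) (u (α j)) = 1`. -/
theorem eq_one_of_apply_eq [CharZero R] (hs : ∀ i x, s i x = x - B x (α i) • α i)
    (hdiag : ∀ i, B (α i) (α i) = 2) (hsymm : ∀ x y, B x y = B y x)
    (hoff : ∀ i j, i ≠ j → B (α i) (α j) = 0 ∨ B (α i) (α j) = -1) {x : H}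
    (hx : ∀ k, B x (α k) = 1) {u : H ≃ₗ[R] H} (hu : u ∈ Submonoid.closure (range s))
    (hux : u x = x) : u = 1 := by
  by_contra h1
  obtain ⟨_, ⟨j, rfl⟩, hj⟩ :=
    exists_wordLength_mul_lt (forall_mem_range.2 (reflection_mul_self hs hdiag)) hu h1
  have hpos := apply_root_mem_closure_of_wordLength_le hs hdiag hsymm hoff
    (mul_mem hu (Submonoid.subset_closure (mem_range_self j))) (i := j)
    (by rw [mul_assoc, reflection_mul_self hs hdiag, mul_one]; exact hj.le)
  obtain ⟨n, hn⟩ := exists_bilin_eq_natCast hx hpos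
  have hneg : B x ((u * s j) (α j)) = -1 := by
    conv_lhs => rw [← hux]
    rw [LinearEquiv.mul_apply, reflection_apply_root hs hdiag, map_neg, map_neg,
      bilin_apply_apply_of_mem_closure hs hdiag hsymm hu, hx]
  exact Nat.cast_add_one_ne_zero n (by rw [← hn, hneg]; ring)

end Reflections

section FixedVectors

variable {K H I : Type*} [Field K] [CharZero K] [AddCommGroup H] [Module K H]

/-- `∑ w ∈ W, w` kills each `α k` (reindex by the element negating it), hence vanishes, while
it sends a fixed vector `z` to `|W| • z`. -/
lemma eq_zero_of_forall_mem_apply_eq (W : Subgroup (H ≃ₗ[K] H)) [Finite W]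
    (α : Module.Basis I K H) (hneg : ∀ k, ∃ r ∈ W, r (α k) = -α k) {z : H}
    (hz : ∀ w ∈ W, w z = z) : z = 0 := by
  have := Fintype.ofFinite W
  let A : H →ₗ[K] H := ∑ w : W, ((w : H ≃ₗ[K] H) : H →ₗ[K] H)
  have hA (y : H) : A y = ∑ w : W, (w : H ≃ₗ[K] H) y := LinearMap.sum_apply _ _ _
  have hA0 : A = 0 := α.ext fun k => by
    obtain ⟨r, hr, hrk⟩ := hneg k
    have hself : A (α k) = -A (α k) := by
      calc A (α k) = ∑ w : W, ((w * ⟨r, hr⟩ : W) : H ≃ₗ[K] H) (α k) :=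
            (hA _).trans (Equiv.sum_comp (Equiv.mulRight (⟨r, hr⟩ : W)) _).symm
        _ = -A (α k) := by simp [hA, hrk]
    have := IsAddTorsionFree.of_isTorsionFree K H
    exact self_eq_neg.mp hself
  have hsum : ∑ w : W, (w : H ≃ₗ[K] H) z = 0 := by rw [← hA, hA0, LinearMap.zero_apply]
  have hcard : (Fintype.card W : K) • z = 0 := by
    rw [Nat.cast_smul_eq_nsmul K, ← Finset.card_univ, ← Finset.sum_const, ← hsum]
    exact Finset.sum_congr rfl fun w _ => (hz w w.2).symm
  exact (smul_eq_zero.mp hcard).resolve_left (Nat.cast_ne_zero.mpr Fintype.card_ne_zero)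

lemma bijective_pi_bilin_root [Fintype I] (α : Module.Basis I K H) {B : LinearMap.BilinForm K H}
    {s : I → H ≃ₗ[K] H} (hs : ∀ i x, s i x = x - B x (α i) • α i)
    (hdiag : ∀ i, B (α i) (α i) = 2) (hW : Finite (Subgroup.closure (range s))) :
    Function.Bijective (LinearMap.pi fun k => B.flip (α k)) := by
  have hinj : Function.Injective (LinearMap.pi fun k => B.flip (α k)) := by
    refine (injective_iff_map_eq_zero _).2 fun z hz => ?_
    have hzk (k : I) : B z (α k) = 0 := congrFun hz k
    refine eq_zero_of_forall_mem_apply_eq _ α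
      (fun k => ⟨s k, Subgroup.subset_closure (mem_range_self k), ?_⟩) fun w hw => ?_
    · rw [hs, hdiag]; module
    · have hfix : Subgroup.closure (range s) ≤ MulAction.stabilizer (H ≃ₗ[K] H) z :=
        (Subgroup.closure_le _).2 <| forall_mem_range.2 fun k => by
          simp [MulAction.mem_stabilizer_iff, hs, hzk]
      exact hfix hw
  have := Module.Finite.of_basis α
  refine ⟨hinj, (LinearMap.injective_iff_surjective_of_finrank_eq_finrank ?_).1 hinj⟩
  simp [Module.finrank_eq_card_basis α]

end FixedVectors

lemma bilin_apply_root_of_conj {R H I : Type*} [CommRing R] [AddCommGroup H] [Module R H]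
    (α : Module.Basis I R H) {B : LinearMap.BilinForm R H} {s : I → H ≃ₗ[R] H}
    (hs : ∀ i x, s i x = x - B x (α i) • α i)
    {e : H ≃ₗ[R] H} {k k' : I} (he : e (α k) = α k') (hconj : e * s k * e⁻¹ = s k') (z : H) :
    B (e z) (α k') = B z (α k) := by
  have h : e (s k z) = s k' (e z) := by rw [← hconj]; simp
  rw [hs, hs, map_sub, map_smul, he, sub_right_inj] at h
  simpa using congrArg (fun v => α.repr v k') h.symm

lemma conj_mem_closure_of_forall_conj_mem {G : Type*} [Group G] {S : Set G} {g x : G}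
    (hS : ∀ y ∈ S, g * y * g⁻¹ ∈ S) (hx : x ∈ Subgroup.closure S) :
    g * x * g⁻¹ ∈ Subgroup.closure S := by
  have hmap : (Subgroup.closure S).map (MulAut.conj g).toMonoidHom ≤ Subgroup.closure S := by
    rw [MonoidHom.map_closure]
    exact Subgroup.closure_mono (by rintro _ ⟨y, hy, rfl⟩; exact hS y hy)
  exact hmap ⟨x, hx, rfl⟩

theorem stmt0_general
    {I : Type*} [Fintype I] {H : Type*} [AddCommGroup H] [Module ℂ H]
    (α : Module.Basis I ℂ H)                      -- the simple roots
    (B : LinearMap.BilinForm ℂ H)          -- the invariant inner product (Killing form)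
    (hBsymm : ∀ x y : H, B x y = B y x)
    (hdiag : ∀ i, B (α i) (α i) = 2)       -- simply laced normalization
    (hoff : ∀ i j, i ≠ j → B (α i) (α j) = 0 ∨ B (α i) (α j) = -1)  -- simply laced
    (s : I → (H ≃ₗ[ℂ] H))                  -- the simple reflections
    (hs : ∀ i x, s i x = x - B x (α i) • α i)
    (W : Subgroup (H ≃ₗ[ℂ] H))
    (hW : W = Subgroup.closure (Set.range s))   -- the Weyl group
    (hWfin : Finite W)
    {G : Type*} [Group G] [MulAction G I]   -- G acts on the diagram
    (P : G →* (H ≃ₗ[ℂ] H))                 -- induced action of G on H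
    (hP : ∀ (g : G) (i : I), P g (α i) = α (g • i))
    (hconj : ∀ (g : G) (i : I), P g * s i * (P g)⁻¹ = s (g • i))  -- G permutes the sᵢ
    (w : H ≃ₗ[ℂ] H) (hw : w ∈ W) :
    (∀ x : H, (∀ g : G, P g x = x) → ∀ g : G, P g (w x) = w x) ↔
      (∀ g : G, P g * w * (P g)⁻¹ = w) := by
  obtain ⟨hinj, hsurj⟩ := bijective_pi_bilin_root α hs hdiag (hW ▸ hWfin)
  obtain ⟨ρ, hρ⟩ := hsurj 1
  have hρk (k : I) : B ρ (α k) = 1 := congrFun hρ k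
  have hρG (g : G) : P g ρ = ρ := hinj <| funext fun k => by
    change B (P g ρ) (α k) = B ρ (α k)
    rw [← smul_inv_smul g k, bilin_apply_root_of_conj α hs (hP g _) (hconj g _), hρk, hρk]
  have hinvG (g : G) {x : H} (hx : ∀ g, P g x = x) : (P g)⁻¹ x = x := by
    rw [← map_inv]; exact hx g⁻¹
  constructor
  · intro hpres g
    have hconjW : P g * w * (P g)⁻¹ ∈ W := hW ▸ conj_mem_closure_of_forall_conj_mem
      (forall_mem_range.2 fun i => hconj g i ▸ mem_range_self _) (hW ▸ hw)
    have hfix : (w⁻¹ * (P g * w * (P g)⁻¹)) ρ = ρ := by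
      simp [hinvG g hρG, hpres ρ hρG g]
    have hone := eq_one_of_apply_eq hs hdiag hBsymm hoff hρk
      (mem_submonoidClosure_of_mem_closure hs hdiag (hW ▸ mul_mem (inv_mem hw) hconjW)) hfix
    exact (inv_mul_eq_one.mp hone).symm
  · intro hcomm x hx g
    conv_rhs => rw [← hcomm g]
    simp [hinvG g hx]

/-- Let `Ŵ` (here `W`) be the Weyl group of a simply laced root system with
simple roots `α i` forming a basis of the Cartan subalgebra `H`, and let a finite group `G`
act on the Dynkin diagram (hence on the index set `I`, on `H` by permuting the simple roots via
`P`, and on `W` by conjugation).  Then an element `w ∈ W` preserves the fixed subspace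
`𝔥 = H^G` if and only if `w` is fixed by the conjugation action of `G`, i.e. the set of
elements of `W` preserving `H^G` is exactly `W^G`. -/
theorem stmt0
    {I : Type*} [Fintype I] {H : Type*} [AddCommGroup H] [Module ℂ H]
    (α : Module.Basis I ℂ H)                      -- the simple roots
    (B : LinearMap.BilinForm ℂ H)          -- the invariant inner product (Killing form)
    (hBsymm : ∀ x y : H, B x y = B y x)
    (hdiag : ∀ i, B (α i) (α i) = 2)       -- simply laced normalization
    (hoff : ∀ i j, i ≠ j → B (α i) (α j) = 0 ∨ B (α i) (α j) = -1)  -- simply laced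
    (s : I → (H ≃ₗ[ℂ] H))                  -- the simple reflections
    (hs : ∀ i x, s i x = x - B x (α i) • α i)
    (W : Subgroup (H ≃ₗ[ℂ] H))
    (hW : W = Subgroup.closure (Set.range s))   -- the Weyl group
    (hWfin : Finite W)
    {G : Type*} [Group G] [Finite G] [MulAction G I]   -- G acts on the diagram
    (P : G →* (H ≃ₗ[ℂ] H))                 -- induced action of G on H
    (hP : ∀ (g : G) (i : I), P g (α i) = α (g • i))
    (hconj : ∀ (g : G) (i : I), P g * s i * (P g)⁻¹ = s (g • i))  -- G permutes the sᵢ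
    (w : H ≃ₗ[ℂ] H) (hw : w ∈ W) :
    (∀ x : H, (∀ g : G, P g x = x) → ∀ g : G, P g (w x) = w x) ↔
      (∀ g : G, P g * w * (P g)⁻¹ = w) :=
  stmt0_general α B hBsymm hdiag hoff s hs W hW hWfin P hP hconj w hw
end

section
/- Let $\hat{W}$ be the Weyl group of a simply laced root system with a finite group $G$ acting by diagram automorphisms, $J = I/G$ the set of orbits of nodes, and for each $j \in J$ let $w^0_j$ be the longest element of the parabolic subgroup $\hat{W}_j$ generated by $\{s_i : i \in j\}$. Given a subset $J' \subset J$, let $I' = \bigcup_{j \in J'} j$ and let $\hat{W}'$ be the parabolic subgroup of $\hat{W}$ generated by $\{s_i : i \in I'\}$. Then $\hat{W}' \cap \hat{W}^G$ equals the subgroup of $\hat{W}^G$ generated by $\{w^0_j : j \in J'\}$. -/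
/-!
The key fact is positivity of roots (Humphreys, *Reflection groups and Coxeter groups*, 5.4):
if `ℓ(w sᵢ) > ℓ(w)` then `w αᵢ` has nonnegative coordinates. The induction writes `w = v u` with
`u` in a rank-two parabolic subgroup and `v` of minimal length; there the claim is a direct
check, using that the determinant is a sign character. It follows that the longest element
`w0 j` of `Ŵⱼ` is the unique element of `Ŵⱼ` sending every simple root of the orbit `j` to a
negative root. As `G` permutes these simple roots, this uniqueness makes `w0 j` `G`-invariant.

Conversely, a `G`-invariant `w ≠ 1` in `Ŵ'` sends some `αᵢ` to a negative root, hence, by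
invariance, every `αₖ` with `k` in the orbit `j` of `i`. Then `w * w0 j` has fewer inversions than
`w`, since `w0 j` negates the positive roots in the span of that orbit and permutes the others.
Induction on the number of inversions puts `w` in `⟨w0 j : j ∈ J'⟩`.
-/

/-- Word length of `g` with respect to a set `S` of generators. -/
noncomputable def lengthWrt {M : Type*} [Monoid M] (S : Set M) (g : M) : ℕ :=
  sInf {n | ∃ l : List M, (∀ x ∈ l, x ∈ S) ∧ l.length = n ∧ l.prod = g}

section WordLength

variable {Γ : Type*} [Group Γ] {S T : Set Γ} {u v w x y : Γ}
  {M : Type*} [Monoid M] [HasDistribNeg M] {χ : Γ →* M}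

theorem exists_list_prod_eq_of_mem_closure (hS : ∀ x ∈ S, x * x = 1)
    (hu : u ∈ Subgroup.closure S) : ∃ l : List Γ, (∀ x ∈ l, x ∈ S) ∧ l.prod = u := by
  rw [← Subgroup.mem_toSubmonoid, Subgroup.closure_toSubmonoid] at hu
  obtain ⟨l, hl, rfl⟩ := Submonoid.exists_list_of_mem_closure hu
  refine ⟨l, fun x hx => ?_, rfl⟩
  rcases hl x hx with h | h
  · exact h
  · rw [Set.mem_inv] at h
    rwa [mul_eq_one_iff_eq_inv.mp (hS _ h), inv_inv] at h

theorem lengthWrt_le_length {l : List Γ} (hl : ∀ x ∈ l, x ∈ S) :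
    lengthWrt S l.prod ≤ l.length :=
  Nat.sInf_le ⟨l, hl, rfl, rfl⟩

theorem exists_length_eq_lengthWrt (hS : ∀ x ∈ S, x * x = 1) (hu : u ∈ Subgroup.closure S) :
    ∃ l : List Γ, (∀ x ∈ l, x ∈ S) ∧ l.length = lengthWrt S u ∧ l.prod = u := by
  obtain ⟨l, hl, hlu⟩ := exists_list_prod_eq_of_mem_closure hS hu
  exact Nat.sInf_mem (s := {n | ∃ l : List Γ, (∀ x ∈ l, x ∈ S) ∧ l.length = n ∧ l.prod = u})
    ⟨l.length, l, hl, rfl, hlu⟩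

@[simp]
theorem lengthWrt_one : lengthWrt S (1 : Γ) = 0 :=
  Nat.le_zero.mp (lengthWrt_le_length (l := []) (by simp))

theorem lengthWrt_eq_zero_iff (hS : ∀ x ∈ S, x * x = 1) (hu : u ∈ Subgroup.closure S) :
    lengthWrt S u = 0 ↔ u = 1 := by
  refine ⟨fun h => ?_, fun h => h ▸ lengthWrt_one⟩
  obtain ⟨l, -, hl, rfl⟩ := exists_length_eq_lengthWrt hS hu
  rw [h, List.length_eq_zero_iff] at hl
  simp [hl]

theorem lengthWrt_le_one (hx : x ∈ S) : lengthWrt S x ≤ 1 := by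
  simpa using lengthWrt_le_length (l := [x]) (by simpa using hx)

theorem mem_of_lengthWrt_eq_one (hS : ∀ x ∈ S, x * x = 1) (hu : u ∈ Subgroup.closure S)
    (h : lengthWrt S u = 1) : u ∈ S := by
  obtain ⟨l, hlS, hl, rfl⟩ := exists_length_eq_lengthWrt hS hu
  obtain ⟨y, rfl⟩ := List.length_eq_one_iff.mp (hl.trans h)
  simpa using hlS y

theorem lengthWrt_mul_le (hS : ∀ x ∈ S, x * x = 1) (hu : u ∈ Subgroup.closure S)
    (hv : v ∈ Subgroup.closure S) : lengthWrt S (u * v) ≤ lengthWrt S u + lengthWrt S v := by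
  obtain ⟨l₁, hl₁, hlen₁, rfl⟩ := exists_length_eq_lengthWrt hS hu
  obtain ⟨l₂, hl₂, hlen₂, rfl⟩ := exists_length_eq_lengthWrt hS hv
  rw [← List.prod_append, ← hlen₁, ← hlen₂, ← List.length_append]
  exact lengthWrt_le_length (by simpa [or_imp, forall_and] using And.intro hl₁ hl₂)

theorem lengthWrt_mul_le_succ (hS : ∀ x ∈ S, x * x = 1) (hu : u ∈ Subgroup.closure S)
    (hx : x ∈ S) : lengthWrt S (u * x) ≤ lengthWrt S u + 1 :=
  (lengthWrt_mul_le hS hu (Subgroup.subset_closure hx)).trans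
    (Nat.add_le_add_left (lengthWrt_le_one hx) _)

theorem lengthWrt_le_lengthWrt_of_subset (hT : ∀ x ∈ T, x * x = 1) (hTS : T ⊆ S)
    (hu : u ∈ Subgroup.closure T) : lengthWrt S u ≤ lengthWrt T u := by
  obtain ⟨l, hl, hlen, rfl⟩ := exists_length_eq_lengthWrt hT hu
  exact hlen ▸ lengthWrt_le_length fun x hx => hTS (hl x hx)

theorem exists_lengthWrt_mul_lt (hS : ∀ x ∈ S, x * x = 1) (hu : u ∈ Subgroup.closure S)
    (hu1 : u ≠ 1) : ∃ x ∈ S, lengthWrt S (u * x) < lengthWrt S u := by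
  obtain ⟨l, hl, hlen, rfl⟩ := exists_length_eq_lengthWrt hS hu
  obtain ⟨l', x, rfl⟩ := List.eq_nil_or_concat l |>.resolve_left (by rintro rfl; simp at hu1)
  refine ⟨x, hl x (by simp), ?_⟩
  have hx := hS x (hl x (by simp))
  rw [← hlen, List.concat_eq_append, List.prod_append, List.prod_singleton, mul_assoc, hx,
    mul_one]
  exact (lengthWrt_le_length fun y hy => hl y (by simp [hy])).trans_lt (by simp)

theorem exists_mul_eq_lengthWrt_add (hS : ∀ x ∈ S, x * x = 1) (hTS : T ⊆ S)
    (hw : w ∈ Subgroup.closure S) :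
    ∃ v u, w = v * u ∧ u ∈ Subgroup.closure T ∧
      lengthWrt S w = lengthWrt S v + lengthWrt T u ∧
      ∀ x ∈ T, lengthWrt S v ≤ lengthWrt S (v * x) := by
  have hT : ∀ x ∈ T, x * x = 1 := fun x hx => hS x (hTS hx)
  set A := {v | v⁻¹ * w ∈ Subgroup.closure T ∧
    lengthWrt S w = lengthWrt S v + lengthWrt T (v⁻¹ * w)}
  obtain ⟨v, ⟨hvT, hvw⟩, hmin⟩ := (InvImage.wf (lengthWrt S) wellFounded_lt).has_min A
    ⟨w, by simp [A]⟩
  refine ⟨v, v⁻¹ * w, by group, hvT, hvw, fun x hx => not_lt.mp fun hlt => hmin (v * x) ?_ hlt⟩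
  have hxu : (v * x)⁻¹ * w = x * (v⁻¹ * w) := by
    rw [mul_inv_rev, inv_eq_of_mul_eq_one_right (hT x hx), mul_assoc]
  have hxuT : x * (v⁻¹ * w) ∈ Subgroup.closure T := mul_mem (Subgroup.subset_closure hx) hvT
  have hv : v ∈ Subgroup.closure S := by
    simpa using mul_mem hw (inv_mem (Subgroup.closure_mono hTS hvT))
  have hle : lengthWrt T (x * (v⁻¹ * w)) ≤ lengthWrt T (v⁻¹ * w) + 1 :=
    (lengthWrt_mul_le hT (Subgroup.subset_closure hx) hvT).trans
      (by have := lengthWrt_le_one hx; omega)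
  have hge : lengthWrt S w ≤ lengthWrt S (v * x) + lengthWrt T (x * (v⁻¹ * w)) := by
    calc lengthWrt S w = lengthWrt S (v * x * (x * (v⁻¹ * w))) := by
          rw [mul_assoc, ← mul_assoc x, hT x hx, one_mul, mul_inv_cancel_left]
      _ ≤ lengthWrt S (v * x) + lengthWrt S (x * (v⁻¹ * w)) :=
          lengthWrt_mul_le hS (mul_mem hv (Subgroup.subset_closure (hTS hx)))
            (Subgroup.closure_mono hTS hxuT)
      _ ≤ _ := Nat.add_le_add_left (lengthWrt_le_lengthWrt_of_subset hT hTS hxuT) _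
  exact ⟨hxu ▸ hxuT, by rw [hxu]; omega⟩

theorem map_eq_neg_one_pow_lengthWrt (hχ : ∀ x ∈ S, χ x = -1) (hS : ∀ x ∈ S, x * x = 1)
    (hu : u ∈ Subgroup.closure S) :
    χ u = (-1) ^ lengthWrt S u := by
  obtain ⟨l, hl, hlen, rfl⟩ := exists_length_eq_lengthWrt hS hu
  rw [← hlen, map_list_prod]
  clear hlen hu
  induction l with
  | nil => simp
  | cons y l ih =>
    simp only [List.mem_cons, forall_eq_or_imp] at hl
    simp [hχ y hl.1, ih hl.2, pow_succ']

theorem lengthWrt_mul_ne (hχ : ∀ x ∈ S, χ x = -1) (hM : (-1 : M) ≠ 1) (hS : ∀ x ∈ S, x * x = 1)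
    (hu : u ∈ Subgroup.closure S) (hx : x ∈ S) : lengthWrt S (u * x) ≠ lengthWrt S u := by
  intro h
  have := map_mul χ u x
  rw [hχ x hx, map_eq_neg_one_pow_lengthWrt hχ hS hu,
    map_eq_neg_one_pow_lengthWrt hχ hS (mul_mem hu (Subgroup.subset_closure hx)), h,
    ← pow_succ] at this
  rcases Nat.even_or_odd (lengthWrt S u) with he | ho
  · rw [he.neg_one_pow, (he.add_one).neg_one_pow] at this
    exact hM this.symm
  · rw [ho.neg_one_pow, (ho.add_one).neg_one_pow] at this
    exact hM this

theorem lengthWrt_eq_one_of_map_eq_neg_one (hχ : ∀ z ∈ T, χ z = -1) (hM : (-1 : M) ≠ 1)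
    (hS : ∀ z ∈ T, z * z = 1) (hx : x ∈ T) : lengthWrt T x = 1 := by
  have hx1 : x ≠ 1 := fun h => hM (by rw [← hχ x hx, h, map_one])
  have := (lengthWrt_eq_zero_iff hS (Subgroup.subset_closure hx)).not.mpr hx1
  have := lengthWrt_le_one hx
  omega

theorem lengthWrt_mul_eq_two_of_map_eq_neg_one (hχ : ∀ z ∈ T, χ z = -1) (hM : (-1 : M) ≠ 1)
    (hS : ∀ z ∈ T, z * z = 1) (hx : x ∈ T) (hy : y ∈ T) (hxy : x ≠ y) :
    lengthWrt T (x * y) = 2 := by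
  have hx' : x ∈ Subgroup.closure T := Subgroup.subset_closure hx
  have hxy1 : x * y ≠ 1 := fun h => hxy (by
    rw [← inv_eq_of_mul_eq_one_right h, inv_eq_of_mul_eq_one_right (hS x hx)])
  have := (lengthWrt_eq_zero_iff hS (mul_mem hx' (Subgroup.subset_closure hy))).not.mpr hxy1
  have := lengthWrt_mul_ne hχ hM hS hx' hy
  have := lengthWrt_mul_le_succ hS hx' hy
  have := lengthWrt_eq_one_of_map_eq_neg_one hχ hM hS hx
  omega

end WordLength

section Dihedral

variable {Γ : Type*} [Group Γ] {x y u : Γ} {M : Type*} [Monoid M] [HasDistribNeg M]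
  {χ : Γ →* M}

theorem mem_closure_pair_of_commute (hx : x * x = 1) (hy : y * y = 1) (hxy : x * y = y * x)
    (hu : u ∈ Subgroup.closure {x, y}) : u = 1 ∨ u = x ∨ u = y ∨ u = x * y := by
  have hxyy : x * y * y = x := by rw [mul_assoc, hy, mul_one]
  have step : ∀ z ∈ ({x, y} : Set Γ), ∀ v : Γ, (v = 1 ∨ v = x ∨ v = y ∨ v = x * y) →
      (z * v = 1 ∨ z * v = x ∨ z * v = y ∨ z * v = x * y) := by
    rintro z hz v hv
    rcases hz with rfl | rfl <;> rcases hv with rfl | rfl | rfl | rfl <;>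
      simp [← mul_assoc, hx, hy, ← hxy, hxyy]
  induction hu using Subgroup.closure_induction_left with
  | one => simp
  | mul_left z hz v _ ih => exact step z hz v ih
  | inv_mul_cancel z hz v _ ih =>
    have hz' : z⁻¹ = z := by rcases hz with rfl | rfl <;> exact inv_eq_of_mul_eq_one_right ‹_›
    rw [hz']
    exact step z hz v ih

theorem mem_closure_pair_of_braid (hx : x * x = 1) (hy : y * y = 1)
    (hxy : x * y * x = y * x * y) (hu : u ∈ Subgroup.closure {x, y}) :
    u = 1 ∨ u = x ∨ u = y ∨ u = x * y ∨ u = y * x ∨ u = x * y * x := by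
  have hxyxx : x * y * x * x = x * y := by rw [mul_assoc, hx, mul_one]
  have step : ∀ z ∈ ({x, y} : Set Γ), ∀ v : Γ,
      (v = 1 ∨ v = x ∨ v = y ∨ v = x * y ∨ v = y * x ∨ v = x * y * x) →
      (z * v = 1 ∨ z * v = x ∨ z * v = y ∨ z * v = x * y ∨ z * v = y * x ∨
        z * v = x * y * x) := by
    rintro z hz v hv
    rcases hz with rfl | rfl <;> rcases hv with rfl | rfl | rfl | rfl | rfl | rfl <;>
      simp [← mul_assoc, hx, hy, ← hxy, hxyxx]
  induction hu using Subgroup.closure_induction_left with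
  | one => simp
  | mul_left z hz v _ ih => exact step z hz v ih
  | inv_mul_cancel z hz v _ ih =>
    have hz' : z⁻¹ = z := by rcases hz with rfl | rfl <;> exact inv_eq_of_mul_eq_one_right ‹_›
    rw [hz']
    exact step z hz v ih

theorem eq_or_lengthWrt_mul_lt_of_commute (hχ : ∀ z ∈ ({x, y} : Set Γ), χ z = -1)
    (hM : (-1 : M) ≠ 1) (hS : ∀ z ∈ ({x, y} : Set Γ), z * z = 1) (hxy : x ≠ y)
    (hc : x * y = y * x) (hu : u ∈ Subgroup.closure {x, y}) :
    u = 1 ∨ u = y ∨ lengthWrt {x, y} (u * x) < lengthWrt {x, y} u := by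
  have hx : x * x = 1 := hS x (Or.inl rfl)
  have hy : y * y = 1 := hS y (Or.inr rfl)
  have hℓx := lengthWrt_eq_one_of_map_eq_neg_one hχ hM hS (Or.inl rfl)
  have hℓy := lengthWrt_eq_one_of_map_eq_neg_one hχ hM hS (Or.inr rfl)
  rcases mem_closure_pair_of_commute hx hy hc hu with rfl | rfl | rfl | rfl
  · exact Or.inl rfl
  · simp [hx, hℓx]
  · exact Or.inr (Or.inl rfl)
  · have : x * y * x = y := by rw [hc, mul_assoc, hx, mul_one]
    rw [this, hℓy, lengthWrt_mul_eq_two_of_map_eq_neg_one hχ hM hS (Or.inl rfl) (Or.inr rfl)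
      hxy]
    simp

theorem eq_or_lengthWrt_mul_lt_of_braid (hχ : ∀ z ∈ ({x, y} : Set Γ), χ z = -1)
    (hM : (-1 : M) ≠ 1) (hS : ∀ z ∈ ({x, y} : Set Γ), z * z = 1) (hxy : x ≠ y)
    (hb : x * y * x = y * x * y) (hu : u ∈ Subgroup.closure {x, y}) :
    u = 1 ∨ u = y ∨ u = x * y ∨ lengthWrt {x, y} (u * x) < lengthWrt {x, y} u := by
  have hx : x * x = 1 := hS x (Or.inl rfl)
  have hy : y * y = 1 := hS y (Or.inr rfl)
  have hxT : x ∈ Subgroup.closure {x, y} := Subgroup.subset_closure (Or.inl rfl)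
  have hyT : y ∈ Subgroup.closure {x, y} := Subgroup.subset_closure (Or.inr rfl)
  have hℓx := lengthWrt_eq_one_of_map_eq_neg_one hχ hM hS (Or.inl rfl)
  have hℓy := lengthWrt_eq_one_of_map_eq_neg_one hχ hM hS (Or.inr rfl)
  have hℓxy := lengthWrt_mul_eq_two_of_map_eq_neg_one hχ hM hS (Or.inl rfl) (Or.inr rfl) hxy
  have hℓyx :=
    lengthWrt_mul_eq_two_of_map_eq_neg_one hχ hM hS (Or.inr rfl) (Or.inl rfl) hxy.symm
  rcases mem_closure_pair_of_braid hx hy hb hu with rfl | rfl | rfl | rfl | rfl | rfl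
  · exact Or.inl rfl
  · simp [hx, hℓx]
  · exact Or.inr (Or.inl rfl)
  · exact Or.inr (Or.inr (Or.inl rfl))
  · rw [mul_assoc, hx, mul_one, hℓy, hℓyx]
    simp
  · have hxyx : x * y * x * x = x * y := by rw [mul_assoc, hx, mul_one]
    have hmem : x * y * x ∈ Subgroup.closure {x, y} := mul_mem (mul_mem hxT hyT) hxT
    have hℓ : lengthWrt {x, y} (x * y * x) ≠ 1 := fun h => by
      rcases mem_of_lengthWrt_eq_one hS hmem h with h' | h'
      · have : x * y = 1 := mul_eq_right.mp h'
        simp [this] at hℓxy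
      · have : y * x = 1 := mul_eq_right.mp (hb ▸ h')
        simp [this] at hℓyx
    have := lengthWrt_mul_ne hχ hM hS (mul_mem hxT hyT) (Or.inl rfl)
    have := lengthWrt_mul_le_succ hS (mul_mem hxT hyT) (Or.inl rfl)
    have := lengthWrt_mul_le_succ hS hmem (Or.inl rfl)
    rw [hxyx] at this ⊢
    right; right; right
    omega

end Dihedral

theorem LinearMap.det_id_sub_smulRight {R M : Type*} [CommRing R] [AddCommGroup M]
    [Module R M] [Module.Free R M] [Module.Finite R M] (f : M →ₗ[R] R) (x : M) :
    LinearMap.det (LinearMap.id - f.smulRight x) = 1 - f x := by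
  classical
  let b := Module.Free.chooseBasis R M
  have hmat : LinearMap.toMatrix b b (LinearMap.id - f.smulRight x) =
      1 - Matrix.replicateCol Unit (b.repr x) * Matrix.replicateRow Unit fun l => f (b l) := by
    ext k l
    simp [LinearMap.toMatrix_apply, Matrix.one_apply, Finsupp.single_apply, Matrix.mul_apply,
      mul_comm, eq_comm]
  rw [← LinearMap.det_toMatrix b, hmat, Matrix.det_one_sub_mul_comm, Matrix.det_unique]
  have hfx : f x = ∑ k, f (b k) * b.repr x k := by
    conv_lhs => rw [← b.sum_repr x]
    simp only [map_sum, map_smul, smul_eq_mul, mul_comm]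
  simp only [Matrix.sub_apply, Matrix.one_apply_eq, Matrix.mul_apply, Matrix.replicateRow_apply,
    Matrix.replicateCol_apply, hfx]

-- With this order, `0 ≤ R.α.repr v` says that all coordinates of `v` are real and nonnegative.
open scoped ComplexOrder

structure SimplyLacedDatum (I H : Type*) [AddCommGroup H] [Module ℂ H] where
  α : Module.Basis I ℂ H
  B : LinearMap.BilinForm ℂ H
  B_comm : ∀ x y : H, B x y = B y x
  B_self : ∀ i, B (α i) (α i) = 2
  B_of_ne : ∀ i j, i ≠ j → B (α i) (α j) = 0 ∨ B (α i) (α j) = -1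
  s : I → (H ≃ₗ[ℂ] H)
  s_apply : ∀ i x, s i x = x - B x (α i) • α i

namespace SimplyLacedDatum

open MulAction

variable {I H : Type*} [AddCommGroup H] [Module ℂ H] (R : SimplyLacedDatum I H)
  {K : Set I} {i j : I} {u w : H ≃ₗ[ℂ] H} {v β : H}
  {G : Type*} [Group G] [MulAction G I] {P : G →* (H ≃ₗ[ℂ] H)}

theorem s_apply_self (i : I) : R.s i (R.α i) = -R.α i := by
  rw [R.s_apply, R.B_self]; module

theorem s_mul_self (i : I) : R.s i * R.s i = 1 := by
  ext x
  change R.s i (R.s i x) = x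
  simp only [R.s_apply, map_sub, map_smul, LinearMap.sub_apply, LinearMap.smul_apply,
    smul_eq_mul, R.B_self]
  module

theorem s_mul_self_of_mem_image : ∀ x ∈ R.s '' K, x * x = 1 := by
  rintro _ ⟨i, -, rfl⟩
  exact R.s_mul_self i

theorem s_apply_alpha_of_B_eq_zero (h : R.B (R.α i) (R.α j) = 0) : R.s j (R.α i) = R.α i := by
  rw [R.s_apply, h, zero_smul, sub_zero]

theorem s_apply_alpha_of_B_eq_neg_one (h : R.B (R.α i) (R.α j) = -1) :
    R.s j (R.α i) = R.α i + R.α j := by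
  rw [R.s_apply, h, neg_one_smul, sub_neg_eq_add]

theorem s_commute_of_B_eq_zero (h : R.B (R.α i) (R.α j) = 0) :
    R.s i * R.s j = R.s j * R.s i := by
  have h' : R.B (R.α j) (R.α i) = 0 := R.B_comm _ _ ▸ h
  ext x
  change R.s i (R.s j x) = R.s j (R.s i x)
  simp only [R.s_apply, map_sub, map_smul, LinearMap.sub_apply, LinearMap.smul_apply,
    smul_eq_mul, h, h']
  module

theorem s_braid_of_B_eq_neg_one (h : R.B (R.α i) (R.α j) = -1) :
    R.s i * R.s j * R.s i = R.s j * R.s i * R.s j := by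
  have h' : R.B (R.α j) (R.α i) = -1 := R.B_comm _ _ ▸ h
  ext x
  change R.s i (R.s j (R.s i x)) = R.s j (R.s i (R.s j x))
  simp only [R.s_apply, map_sub, map_smul, LinearMap.sub_apply, LinearMap.smul_apply,
    smul_eq_mul, R.B_self, h, h']
  module

theorem s_injective : Function.Injective R.s := by
  intro i j hij
  by_contra hne
  have := congrArg (fun f : H ≃ₗ[ℂ] H => R.α.repr (f (R.α i)) i) hij
  norm_num [R.s_apply_self, R.s_apply, Ne.symm hne] at this

theorem repr_alpha_nonneg (i : I) : 0 ≤ R.α.repr (R.α i) := by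
  simp

theorem eq_zero_of_repr_nonneg_of_nonpos (h₁ : 0 ≤ R.α.repr v) (h₂ : R.α.repr v ≤ 0) :
    v = 0 :=
  R.α.repr.map_eq_zero_iff.mp (le_antisymm h₂ h₁)

theorem repr_apply_nonneg (f : H →ₗ[ℂ] H) (hv : 0 ≤ R.α.repr v)
    (hf : ∀ k, R.α.repr v k ≠ 0 → 0 ≤ R.α.repr (f (R.α k))) : 0 ≤ R.α.repr (f v) := by
  rw [← R.α.linearCombination_repr v, Finsupp.linearCombination_apply, map_finsuppSum,
    map_finsuppSum]
  refine Finsupp.sum_nonneg fun k hk => ?_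
  rw [map_smul, map_smul]
  exact smul_nonneg (hv k) (hf k (Finsupp.mem_support_iff.mp hk))

theorem repr_apply_nonpos_of_apply_alpha_eq {f : H ≃ₗ[ℂ] H} {σ : I → I}
    (hf : ∀ i, f (R.α i) = R.α (σ i)) (hv : R.α.repr v ≤ 0) : R.α.repr (f v) ≤ 0 := by
  have := R.repr_apply_nonneg f (v := -v) (by simpa using hv) fun k _ => by simp [hf]
  simpa using this

theorem apply_sub_mem_span (hw : w ∈ Subgroup.closure (R.s '' K)) (v : H) :
    w v - v ∈ Submodule.span ℂ (R.α '' K) := by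
  induction hw using Subgroup.closure_induction generalizing v with
  | mem _ hx =>
    obtain ⟨i, hi, rfl⟩ := hx
    rw [R.s_apply, sub_sub_cancel_left, ← neg_smul]
    exact Submodule.smul_mem _ _ (Submodule.subset_span (Set.mem_image_of_mem _ hi))
  | one => simp
  | mul w₁ w₂ _ _ ih₁ ih₂ =>
    simpa using add_mem (ih₁ (w₂ v)) (ih₂ v)
  | inv w _ ih =>
    simpa using neg_mem (ih (w⁻¹ v))

def roots (K : Set I) : Set H :=
  Set.image2 (fun w i => w (R.α i)) (Subgroup.closure (R.s '' K) : Set (H ≃ₗ[ℂ] H)) K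

theorem alpha_mem_roots (hi : i ∈ K) : R.α i ∈ R.roots K :=
  ⟨1, one_mem _, i, hi, rfl⟩

theorem apply_mem_roots (hw : w ∈ Subgroup.closure (R.s '' K)) (hβ : β ∈ R.roots K) :
    w β ∈ R.roots K := by
  obtain ⟨u, hu, i, hi, rfl⟩ := hβ
  exact ⟨w * u, mul_mem hw hu, i, hi, rfl⟩

theorem neg_mem_roots (hβ : β ∈ R.roots K) : -β ∈ R.roots K := by
  obtain ⟨w, hw, i, hi, rfl⟩ := hβ
  refine ⟨w * R.s i, mul_mem hw (Subgroup.subset_closure ⟨i, hi, rfl⟩), i, hi, ?_⟩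
  simp [R.s_apply_self]

theorem ne_zero_of_mem_roots (hβ : β ∈ R.roots K) : β ≠ 0 := by
  obtain ⟨w, -, i, -, rfl⟩ := hβ
  simpa using R.α.ne_zero i

theorem mem_span_of_mem_roots (hβ : β ∈ R.roots K) : β ∈ Submodule.span ℂ (R.α '' K) := by
  obtain ⟨w, hw, i, hi, rfl⟩ := hβ
  simpa using add_mem (R.apply_sub_mem_span hw (R.α i))
    (Submodule.subset_span (Set.mem_image_of_mem _ hi))

theorem roots_finite (hK : (Subgroup.closure (R.s '' K) : Set (H ≃ₗ[ℂ] H)).Finite)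
    (hKfin : K.Finite) : (R.roots K).Finite :=
  hK.image2 _ hKfin

def inversions (K : Set I) (w : H ≃ₗ[ℂ] H) : Set H :=
  {β | β ∈ R.roots K ∧ 0 ≤ R.α.repr β ∧ R.α.repr (w β) ≤ 0}

def NegatesSimpleRoots (K : Set I) (w : H ≃ₗ[ℂ] H) : Prop :=
  ∀ i ∈ K, R.α.repr (w (R.α i)) ≤ 0

theorem NegatesSimpleRoots.repr_apply_nonpos {R : SimplyLacedDatum I H}
    (h : R.NegatesSimpleRoots K w) (hβ : 0 ≤ R.α.repr β)
    (hβK : β ∈ Submodule.span ℂ (R.α '' K)) : R.α.repr (w β) ≤ 0 := by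
  have := R.repr_apply_nonneg (-(w : H →ₗ[ℂ] H)) hβ fun k hk => by
    have hk : k ∈ K := R.α.mem_span_image.mp hβK (Finsupp.mem_support_iff.mpr hk)
    simpa using h k hk
  simpa using this

theorem conj_mem_closure (hconj : ∀ (g : G) i, P g * R.s i * (P g)⁻¹ = R.s (g • i))
    (hK : ∀ g : G, ∀ i ∈ K, g • i ∈ K) (hw : w ∈ Subgroup.closure (R.s '' K)) (g : G) :
    P g * w * (P g)⁻¹ ∈ Subgroup.closure (R.s '' K) := by
  have : (Subgroup.closure (R.s '' K)).map (MulAut.conj (P g)).toMonoidHom ≤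
      Subgroup.closure (R.s '' K) := by
    rw [MonoidHom.map_closure]
    refine Subgroup.closure_mono ?_
    rintro _ ⟨_, ⟨i, hi, rfl⟩, rfl⟩
    exact ⟨g • i, hK g i hi, (hconj g i).symm⟩
  exact this ⟨w, hw, rfl⟩

theorem negatesSimpleRoots_orbit (hP : ∀ (g : G) i, P g (R.α i) = R.α (g • i))
    (hw : w ∈ Subgroup.centralizer (Set.range P)) (hi : R.α.repr (w (R.α i)) ≤ 0) :
    R.NegatesSimpleRoots (orbit G i) w := by
  rintro _ ⟨g, rfl⟩
  have := Subgroup.mem_centralizer_iff.mp hw (P g) ⟨g, rfl⟩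
  rw [← hP, ← LinearEquiv.mul_apply, ← this, LinearEquiv.mul_apply]
  exact R.repr_apply_nonpos_of_apply_alpha_eq (hP g) hi

section Finite

variable [Fintype I]

theorem det_s (i : I) : LinearEquiv.det (R.s i) = -1 := by
  have : Module.Free ℂ H := Module.Free.of_basis R.α
  have : Module.Finite ℂ H := Module.Finite.of_basis R.α
  have hs : (R.s i : H →ₗ[ℂ] H) = LinearMap.id - (R.B.flip (R.α i)).smulRight (R.α i) := by
    ext x
    simp [R.s_apply]
  ext
  rw [LinearEquiv.coe_det, hs, LinearMap.det_id_sub_smulRight]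
  norm_num [R.B_self]

theorem lengthWrt_mul_s_ne (hw : w ∈ Subgroup.closure (R.s '' K)) (hi : i ∈ K) :
    lengthWrt (R.s '' K) (w * R.s i) ≠ lengthWrt (R.s '' K) w :=
  lengthWrt_mul_ne (χ := LinearEquiv.det) (by rintro _ ⟨k, -, rfl⟩; exact R.det_s k)
    (by norm_num [Units.ext_iff]) R.s_mul_self_of_mem_image hw ⟨i, hi, rfl⟩

theorem apply_alpha_eq_or_lengthWrt_mul_lt (hij : i ≠ j)
    (hu : u ∈ Subgroup.closure {R.s i, R.s j}) :
    u (R.α i) = R.α i ∨ u (R.α i) = R.α j ∨ u (R.α i) = R.α i + R.α j ∨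
      lengthWrt {R.s i, R.s j} (u * R.s i) < lengthWrt {R.s i, R.s j} u := by
  have hχ : ∀ z ∈ ({R.s i, R.s j} : Set (H ≃ₗ[ℂ] H)), LinearEquiv.det z = -1 := by
    rintro z (rfl | rfl) <;> exact R.det_s _
  have hM : (-1 : ℂˣ) ≠ 1 := by norm_num [Units.ext_iff]
  have hS : ∀ z ∈ ({R.s i, R.s j} : Set (H ≃ₗ[ℂ] H)), z * z = 1 := by
    rintro z (rfl | rfl) <;> exact R.s_mul_self _
  have hne := R.s_injective.ne hij
  rcases R.B_of_ne i j hij with h | h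
  · rcases eq_or_lengthWrt_mul_lt_of_commute hχ hM hS hne (R.s_commute_of_B_eq_zero h) hu
      with rfl | rfl | hlt
    · exact Or.inl rfl
    · exact Or.inl (R.s_apply_alpha_of_B_eq_zero h)
    · exact Or.inr (Or.inr (Or.inr hlt))
  · rcases eq_or_lengthWrt_mul_lt_of_braid hχ hM hS hne (R.s_braid_of_B_eq_neg_one h) hu
      with rfl | rfl | rfl | hlt
    · exact Or.inl rfl
    · exact Or.inr (Or.inr (Or.inl (R.s_apply_alpha_of_B_eq_neg_one h)))
    · refine Or.inr (Or.inl ?_)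
      have h' : R.B (R.α j) (R.α i) = -1 := R.B_comm _ _ ▸ h
      change R.s i (R.s j (R.α i)) = R.α j
      rw [R.s_apply_alpha_of_B_eq_neg_one h, map_add, R.s_apply_self,
        R.s_apply_alpha_of_B_eq_neg_one h']
      abel
    · exact Or.inr (Or.inr (Or.inr hlt))

theorem repr_apply_alpha_nonneg_of_lengthWrt_lt (hw : w ∈ Subgroup.closure (R.s '' K))
    (hi : i ∈ K) (h : lengthWrt (R.s '' K) w < lengthWrt (R.s '' K) (w * R.s i)) :
    0 ≤ R.α.repr (w (R.α i)) := by
  -- With `sⱼ` a last letter of `w`, write `w = v u`, `u ∈ ⟨sᵢ, sⱼ⟩`, with `v` shortest.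
  -- Induction applies to `v`, and `u αᵢ ∈ {αᵢ, αⱼ, αᵢ + αⱼ}`, as otherwise `w sᵢ` is shorter.
  induction hn : lengthWrt (R.s '' K) w using Nat.strong_induction_on generalizing w i with
  | _ n ih =>
  have hS := R.s_mul_self_of_mem_image (K := K)
  by_cases hw1 : w = 1
  · subst hw1
    exact R.repr_alpha_nonneg i
  obtain ⟨_, ⟨j, hj, rfl⟩, hj_lt⟩ := exists_lengthWrt_mul_lt hS hw hw1
  have hij : i ≠ j := by rintro rfl; omega
  have hT : {R.s i, R.s j} ⊆ R.s '' K := by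
    rintro _ (rfl | rfl)
    exacts [⟨i, hi, rfl⟩, ⟨j, hj, rfl⟩]
  obtain ⟨v, u, rfl, hu, hlen, hv_le⟩ := exists_mul_eq_lengthWrt_add hS hT hw
  have hv : v ∈ Subgroup.closure (R.s '' K) := by
    simpa using mul_mem hw (inv_mem (Subgroup.closure_mono hT hu))
  have hv_lt : ∀ k ∈ K, R.s k ∈ ({R.s i, R.s j} : Set _) →
      lengthWrt (R.s '' K) v < lengthWrt (R.s '' K) (v * R.s k) := fun k hk hkT =>
    (hv_le _ hkT).lt_of_ne (R.lengthWrt_mul_s_ne hv hk).symm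
  have hu1 : lengthWrt {R.s i, R.s j} u ≠ 0 := by
    intro h0
    rw [(lengthWrt_eq_zero_iff (fun z hz => hS z (hT hz)) hu).mp h0, mul_one] at hj_lt
    exact absurd (hv_lt j hj (Or.inr rfl)) (not_lt.mpr hj_lt.le)
  have hvi := ih _ (by omega) hv hi (hv_lt i hi (Or.inl rfl)) rfl
  have hvj := ih _ (by omega) hv hj (hv_lt j hj (Or.inr rfl)) rfl
  rcases R.apply_alpha_eq_or_lengthWrt_mul_lt hij hu with h' | h' | h' | h'
  · rwa [LinearEquiv.mul_apply, h']
  · rwa [LinearEquiv.mul_apply, h']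
  · rw [LinearEquiv.mul_apply, h', map_add, map_add]
    exact add_nonneg hvi hvj
  · have hui : u * R.s i ∈ Subgroup.closure {R.s i, R.s j} :=
      mul_mem hu (Subgroup.subset_closure (Or.inl rfl))
    have := lengthWrt_mul_le hS hv (Subgroup.closure_mono hT hui)
    have := lengthWrt_le_lengthWrt_of_subset (fun z hz => hS z (hT hz)) hT hui
    rw [mul_assoc] at h
    omega

theorem repr_apply_alpha_nonpos_of_lengthWrt_lt (hw : w ∈ Subgroup.closure (R.s '' K))
    (hi : i ∈ K) (h : lengthWrt (R.s '' K) (w * R.s i) < lengthWrt (R.s '' K) w) :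
    R.α.repr (w (R.α i)) ≤ 0 := by
  have hws : w * R.s i ∈ Subgroup.closure (R.s '' K) :=
    mul_mem hw (Subgroup.subset_closure ⟨i, hi, rfl⟩)
  have := R.repr_apply_alpha_nonneg_of_lengthWrt_lt hws hi
    (by rwa [mul_assoc, R.s_mul_self, mul_one])
  simpa [R.s_apply_self] using this

theorem repr_nonneg_or_nonpos_of_mem_roots (hβ : β ∈ R.roots K) :
    0 ≤ R.α.repr β ∨ R.α.repr β ≤ 0 := by
  obtain ⟨w, hw, i, hi, rfl⟩ := hβ
  rcases lt_or_gt_of_ne (R.lengthWrt_mul_s_ne hw hi) with h | h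
  · exact Or.inr (R.repr_apply_alpha_nonpos_of_lengthWrt_lt hw hi h)
  · exact Or.inl (R.repr_apply_alpha_nonneg_of_lengthWrt_lt hw hi h)

theorem exists_repr_apply_alpha_nonpos (hw : w ∈ Subgroup.closure (R.s '' K)) (hw1 : w ≠ 1) :
    ∃ i ∈ K, R.α.repr (w (R.α i)) ≤ 0 := by
  obtain ⟨_, ⟨i, hi, rfl⟩, h⟩ := exists_lengthWrt_mul_lt R.s_mul_self_of_mem_image hw hw1
  exact ⟨i, hi, R.repr_apply_alpha_nonpos_of_lengthWrt_lt hw hi h⟩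

theorem negatesSimpleRoots_of_forall_lengthWrt_le (hw : w ∈ Subgroup.closure (R.s '' K))
    (hmax : ∀ u ∈ Subgroup.closure (R.s '' K),
      lengthWrt (R.s '' K) u ≤ lengthWrt (R.s '' K) w) :
    R.NegatesSimpleRoots K w := fun i hi =>
  R.repr_apply_alpha_nonpos_of_lengthWrt_lt hw hi <| lt_of_le_of_ne
    (hmax _ (mul_mem hw (Subgroup.subset_closure ⟨i, hi, rfl⟩))) (R.lengthWrt_mul_s_ne hw hi)

theorem NegatesSimpleRoots.eq {R : SimplyLacedDatum I H}
    (hu : u ∈ Subgroup.closure (R.s '' K)) (hw : w ∈ Subgroup.closure (R.s '' K))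
    (huK : R.NegatesSimpleRoots K u) (hwK : R.NegatesSimpleRoots K w) : u = w := by
  rw [← inv_mul_eq_one]
  by_contra hne
  have hx : u⁻¹ * w ∈ Subgroup.closure (R.s '' K) := mul_mem (inv_mem hu) hw
  obtain ⟨i, hi, hxi⟩ := R.exists_repr_apply_alpha_nonpos hx hne
  -- `β = -u⁻¹ w αᵢ` is a positive root of `K`, so `u β = -w αᵢ` is both `≤ 0` and `≥ 0`
  set β := -(u⁻¹ * w) (R.α i)
  have hβ : β ∈ R.roots K := R.neg_mem_roots (R.apply_mem_roots hx (R.alpha_mem_roots hi))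
  have huβ : u β = -w (R.α i) := by simp [β]
  have h₁ := huK.repr_apply_nonpos (by simpa [β] using hxi) (R.mem_span_of_mem_roots hβ)
  have h₂ : 0 ≤ R.α.repr (u β) := by simpa [huβ] using hwK i hi
  have := R.eq_zero_of_repr_nonneg_of_nonpos h₂ h₁
  simp [huβ, R.α.ne_zero i] at this

theorem NegatesSimpleRoots.inv {R : SimplyLacedDatum I H}
    (hw : w ∈ Subgroup.closure (R.s '' K)) (hwK : R.NegatesSimpleRoots K w) :
    R.NegatesSimpleRoots K w⁻¹ := by
  intro i hi
  have hβ : w⁻¹ (R.α i) ∈ R.roots K := R.apply_mem_roots (inv_mem hw) (R.alpha_mem_roots hi)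
  refine (R.repr_nonneg_or_nonpos_of_mem_roots hβ).resolve_left fun h => ?_
  have := hwK.repr_apply_nonpos h (R.mem_span_of_mem_roots hβ)
  have := R.eq_zero_of_repr_nonneg_of_nonpos (R.repr_alpha_nonneg i) (by simpa using this)
  exact R.α.ne_zero i this

theorem NegatesSimpleRoots.mul_self {R : SimplyLacedDatum I H}
    (hw : w ∈ Subgroup.closure (R.s '' K)) (hwK : R.NegatesSimpleRoots K w) : w * w = 1 :=
  inv_eq_iff_mul_eq_one.mp ((hwK.inv hw).eq (inv_mem hw) hw hwK)

theorem repr_apply_nonneg_of_notMem_span {K' : Set I} (hKK' : K ⊆ K')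
    (hu : u ∈ Subgroup.closure (R.s '' K)) (hβ : β ∈ R.roots K') (hβ0 : 0 ≤ R.α.repr β)
    (hβK : β ∉ Submodule.span ℂ (R.α '' K)) :
    0 ≤ R.α.repr (u β) ∧ u β ∉ Submodule.span ℂ (R.α '' K) := by
  have hsub := R.apply_sub_mem_span hu β
  refine ⟨?_, fun h => hβK (by simpa using sub_mem h hsub)⟩
  obtain ⟨k, hk, hkK⟩ := Set.not_subset.mp (mt R.α.mem_span_image.mpr hβK)
  have hk' : R.α.repr (u β) k = R.α.repr β k := by
    have := Finsupp.notMem_support_iff.mp (mt (R.α.mem_span_image.mp hsub ·) hkK)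
    rwa [map_sub, Finsupp.sub_apply, sub_eq_zero] at this
  refine (R.repr_nonneg_or_nonpos_of_mem_roots
    (R.apply_mem_roots (Subgroup.closure_mono (Set.image_mono hKK') hu) hβ)).resolve_right
    fun h => Finsupp.mem_support_iff.mp hk ?_
  exact le_antisymm (hk' ▸ h k) (hβ0 k)

theorem inversions_mul_eq_image {K' : Set I} {w₀ : H ≃ₗ[ℂ] H} (hKK' : K ⊆ K')
    (hw₀ : w₀ ∈ Subgroup.closure (R.s '' K)) (hwK : R.NegatesSimpleRoots K w)
    (hw₀K : R.NegatesSimpleRoots K w₀) :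
    R.inversions K' (w * w₀) =
      w₀ '' {β | β ∈ R.inversions K' w ∧ β ∉ Submodule.span ℂ (R.α '' K)} := by
  have hw₀w₀ : ∀ γ, w₀ (w₀ γ) = γ := fun γ => by
    rw [← LinearEquiv.mul_apply, hw₀K.mul_self hw₀]; rfl
  have hw₀' := Subgroup.closure_mono (Set.image_mono hKK') hw₀
  ext γ
  constructor
  · rintro ⟨hγ, hγ0, hγw⟩
    have hγK : γ ∉ Submodule.span ℂ (R.α '' K) := fun hγK => by
      -- `w₀` sends `γ` to a negative root of `K`, which `w` sends back to a positive one
      have h₁ := hw₀K.repr_apply_nonpos hγ0 hγK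
      have h₂ := hwK.repr_apply_nonpos (β := -w₀ γ) (by simpa using h₁)
        (neg_mem (by simpa using add_mem (R.apply_sub_mem_span hw₀ γ) hγK))
      have := R.eq_zero_of_repr_nonneg_of_nonpos (by simpa using h₂) hγw
      exact R.ne_zero_of_mem_roots hγ (by simpa using this)
    obtain ⟨h0, hK⟩ := R.repr_apply_nonneg_of_notMem_span hKK' hw₀ hγ hγ0 hγK
    exact ⟨w₀ γ, ⟨⟨R.apply_mem_roots hw₀' hγ, h0, hγw⟩, hK⟩, hw₀w₀ γ⟩
  · rintro ⟨δ, ⟨⟨hδ, hδ0, hδw⟩, hδK⟩, rfl⟩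
    obtain ⟨h0, -⟩ := R.repr_apply_nonneg_of_notMem_span hKK' hw₀ hδ hδ0 hδK
    exact ⟨R.apply_mem_roots hw₀' hδ, h0, by rwa [LinearEquiv.mul_apply, hw₀w₀]⟩

theorem ncard_inversions_mul_lt {K' : Set I} {w₀ : H ≃ₗ[ℂ] H} (hKK' : K ⊆ K')
    (hw₀ : w₀ ∈ Subgroup.closure (R.s '' K)) (hwK : R.NegatesSimpleRoots K w)
    (hw₀K : R.NegatesSimpleRoots K w₀) (hi : i ∈ K) (hfin : (R.roots K').Finite) :
    (R.inversions K' (w * w₀)).ncard < (R.inversions K' w).ncard := by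
  rw [R.inversions_mul_eq_image hKK' hw₀ hwK hw₀K, Set.ncard_image_of_injective _ w₀.injective]
  refine Set.ncard_lt_ncard ((Set.ssubset_iff_of_subset (Set.sep_subset _ _)).mpr
    ⟨R.α i, ⟨R.alpha_mem_roots (hKK' hi), R.repr_alpha_nonneg i, hwK i hi⟩, fun h => h.2 ?_⟩)
    (hfin.subset fun β hβ => hβ.1)
  exact Submodule.subset_span (Set.mem_image_of_mem _ hi)

theorem NegatesSimpleRoots.mem_centralizer {R : SimplyLacedDatum I H}
    (hP : ∀ (g : G) i, P g (R.α i) = R.α (g • i))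
    (hconj : ∀ (g : G) i, P g * R.s i * (P g)⁻¹ = R.s (g • i))
    (hK : ∀ g : G, ∀ i ∈ K, g • i ∈ K) (hw : w ∈ Subgroup.closure (R.s '' K))
    (hwK : R.NegatesSimpleRoots K w) : w ∈ Subgroup.centralizer (Set.range P) := by
  rw [Subgroup.mem_centralizer_iff]
  rintro _ ⟨g, rfl⟩
  rw [← mul_inv_eq_iff_eq_mul]
  refine NegatesSimpleRoots.eq (R.conj_mem_closure hconj hK hw g) hw (fun i hi => ?_) hwK
  have hinv : (P g)⁻¹ (R.α i) = R.α (g⁻¹ • i) := by rw [← map_inv, hP]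
  rw [LinearEquiv.mul_apply, LinearEquiv.mul_apply, hinv]
  exact R.repr_apply_nonpos_of_apply_alpha_eq (hP g) (hwK _ (hK _ _ hi))

theorem mem_closure_of_mem_centralizer (hP : ∀ (g : G) i, P g (R.α i) = R.α (g • i))
    {J : Set (orbitRel.Quotient G I)} {w₀ : orbitRel.Quotient G I → (H ≃ₗ[ℂ] H)}
    (hw₀ : ∀ j, w₀ j ∈ Subgroup.closure (R.s '' j.orbit))
    (hw₀K : ∀ j, R.NegatesSimpleRoots j.orbit (w₀ j))
    (hw₀P : ∀ j, w₀ j ∈ Subgroup.centralizer (Set.range P))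
    (hfin : (R.roots {i | Quotient.mk'' i ∈ J}).Finite)
    (hw : w ∈ Subgroup.closure (R.s '' {i | Quotient.mk'' i ∈ J}))
    (hwP : w ∈ Subgroup.centralizer (Set.range P)) :
    w ∈ Subgroup.closure {x | ∃ j ∈ J, x = w₀ j} := by
  induction hn : (R.inversions {i | Quotient.mk'' i ∈ J} w).ncard using Nat.strong_induction_on
    generalizing w with
  | _ n ih =>
  by_cases hw1 : w = 1
  · exact hw1 ▸ one_mem _
  obtain ⟨i, hi, hwi⟩ := R.exists_repr_apply_alpha_nonpos hw hw1
  set j : orbitRel.Quotient G I := Quotient.mk'' i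
  have hjK : j.orbit ⊆ {i | Quotient.mk'' i ∈ J} := fun k hk => by
    simpa [orbitRel.Quotient.mem_orbit.mp hk] using hi
  have hwj : R.NegatesSimpleRoots j.orbit w := R.negatesSimpleRoots_orbit hP hwP hwi
  have hww₀ : w * w₀ j ∈ Subgroup.closure {x | ∃ j ∈ J, x = w₀ j} :=
    ih _ (hn ▸ R.ncard_inversions_mul_lt hjK (hw₀ j) hwj (hw₀K j) (mem_orbit_self i) hfin)
      (mul_mem hw (Subgroup.closure_mono (Set.image_mono hjK) (hw₀ j)))
      (mul_mem hwP (hw₀P j)) rfl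
  simpa [mul_assoc, (hw₀K j).mul_self (hw₀ j)] using
    mul_mem hww₀ (Subgroup.subset_closure ⟨j, hi, rfl⟩)

theorem closure_inf_centralizer_eq (hP : ∀ (g : G) i, P g (R.α i) = R.α (g • i))
    (hconj : ∀ (g : G) i, P g * R.s i * (P g)⁻¹ = R.s (g • i))
    {J : Set (orbitRel.Quotient G I)} {w₀ : orbitRel.Quotient G I → (H ≃ₗ[ℂ] H)}
    (hw₀ : ∀ j, w₀ j ∈ Subgroup.closure (R.s '' j.orbit))
    (hw₀K : ∀ j, R.NegatesSimpleRoots j.orbit (w₀ j))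
    (hfin : (R.roots {i | Quotient.mk'' i ∈ J}).Finite) :
    Subgroup.closure (R.s '' {i | Quotient.mk'' i ∈ J}) ⊓ Subgroup.centralizer (Set.range P) =
      Subgroup.closure {x | ∃ j ∈ J, x = w₀ j} := by
  have hw₀P : ∀ j, w₀ j ∈ Subgroup.centralizer (Set.range P) := fun j =>
    (hw₀K j).mem_centralizer hP hconj (fun g i hi => by
      rw [orbitRel.Quotient.mem_orbit] at hi ⊢
      rw [← hi]
      exact Quotient.sound (mem_orbit i g)) (hw₀ j)
  refine le_antisymm (fun w ⟨hw, hwP⟩ =>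
    R.mem_closure_of_mem_centralizer hP hw₀ hw₀K hw₀P hfin hw hwP) ?_
  rw [Subgroup.closure_le]
  rintro _ ⟨j, hj, rfl⟩
  refine ⟨Subgroup.closure_mono (Set.image_mono fun i hi => ?_) (hw₀ j), hw₀P j⟩
  show Quotient.mk'' i ∈ J
  rwa [orbitRel.Quotient.mem_orbit.mp hi]

end Finite

end SimplyLacedDatum

theorem stmt1_general
    {I : Type*} [Fintype I] {H : Type*} [AddCommGroup H] [Module ℂ H]
    (α : Module.Basis I ℂ H)
    (B : LinearMap.BilinForm ℂ H)
    (hBsymm : ∀ x y : H, B x y = B y x)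
    (hdiag : ∀ i, B (α i) (α i) = 2)
    (hoff : ∀ i j, i ≠ j → B (α i) (α j) = 0 ∨ B (α i) (α j) = -1)
    (s : I → (H ≃ₗ[ℂ] H))
    (hs : ∀ i x, s i x = x - B x (α i) • α i)
    (What : Subgroup (H ≃ₗ[ℂ] H))
    (hWhat : What = Subgroup.closure (Set.range s))
    (hfin : Finite What)
    {G : Type*} [Group G] [MulAction G I]
    (P : G →* (H ≃ₗ[ℂ] H))
    (hP : ∀ (g : G) (i : I), P g (α i) = α (g • i))
    (hconj : ∀ (g : G) (i : I), P g * s i * (P g)⁻¹ = s (g • i))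
    -- `w0 j` is the longest element of the parabolic subgroup `Ŵⱼ = ⟨s i : i ∈ j⟩`:
    (w0 : Quotient (MulAction.orbitRel G I) → (H ≃ₗ[ℂ] H))
    (hw0 : ∀ j : Quotient (MulAction.orbitRel G I),
      w0 j ∈ Subgroup.closure
          {x | ∃ i : I, Quotient.mk (MulAction.orbitRel G I) i = j ∧ x = s i} ∧
      ∀ u ∈ Subgroup.closure
          {x | ∃ i : I, Quotient.mk (MulAction.orbitRel G I) i = j ∧ x = s i},
        lengthWrt {x | ∃ i : I, Quotient.mk (MulAction.orbitRel G I) i = j ∧ x = s i} u ≤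
          lengthWrt {x | ∃ i : I, Quotient.mk (MulAction.orbitRel G I) i = j ∧ x = s i} (w0 j))
    (J' : Set (Quotient (MulAction.orbitRel G I))) :
    {w : H ≃ₗ[ℂ] H |
        w ∈ Subgroup.closure
            {x | ∃ i : I, Quotient.mk (MulAction.orbitRel G I) i ∈ J' ∧ x = s i} ∧
        ∀ g : G, P g * w * (P g)⁻¹ = w} =
      ↑(Subgroup.closure {x | ∃ j ∈ J', x = w0 j}) := by
  let R : SimplyLacedDatum I H := ⟨α, B, hBsymm, hdiag, hoff, s, hs⟩
  have himage (p : I → Prop) : {x | ∃ i, p i ∧ x = s i} = R.s '' {i | p i} := by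
    ext
    simp [R, eq_comm]
  have horbit (j : MulAction.orbitRel.Quotient G I) : {i | Quotient.mk _ i = j} = j.orbit := by
    ext
    exact MulAction.orbitRel.Quotient.mem_orbit.symm
  simp only [himage, horbit] at hw0
  have hroots : (R.roots {i | Quotient.mk'' i ∈ J'}).Finite := by
    refine R.roots_finite (Set.Finite.subset (Set.toFinite What) ?_) (Set.toFinite _)
    rw [hWhat]
    exact Subgroup.closure_mono (Set.image_subset_range _ _)
  have key := R.closure_inf_centralizer_eq hP hconj (fun j => (hw0 j).1)
    (fun j => R.negatesSimpleRoots_of_forall_lengthWrt_le (hw0 j).1 (hw0 j).2) hroots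
  ext w
  rw [← key, himage]
  simp [Subgroup.mem_centralizer_iff, mul_inv_eq_iff_eq_mul]

/-- Let `Ŵ` be the Weyl group of a simply laced root system with a finite
group `G` acting freely by diagram automorphisms, `J = I/G` the set of orbits of nodes, and for
each orbit `j` let `w0 j` be the longest element of the parabolic subgroup `Ŵⱼ` generated by
`{s i : i ∈ j}`.  Given a subset `J' ⊆ J`, with `I' = ⋃_{j ∈ J'} j` and `Ŵ'` the parabolic
subgroup of `Ŵ` generated by `{s i : i ∈ I'}`, we have
`Ŵ' ∩ Ŵ^G = ⟨w0 j : j ∈ J'⟩`. -/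
theorem stmt1
    {I : Type*} [Fintype I] {H : Type*} [AddCommGroup H] [Module ℂ H]
    (α : Module.Basis I ℂ H)
    (B : LinearMap.BilinForm ℂ H)
    (hBsymm : ∀ x y : H, B x y = B y x)
    (hdiag : ∀ i, B (α i) (α i) = 2)
    (hoff : ∀ i j, i ≠ j → B (α i) (α j) = 0 ∨ B (α i) (α j) = -1)
    (s : I → (H ≃ₗ[ℂ] H))
    (hs : ∀ i x, s i x = x - B x (α i) • α i)
    (What : Subgroup (H ≃ₗ[ℂ] H))
    (hWhat : What = Subgroup.closure (Set.range s))
    (hfin : Finite What)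
    {G : Type*} [Group G] [Finite G] [MulAction G I]
    (hfree : ∀ g : G, g ≠ 1 → ∀ i : I, g • i ≠ i)       -- G acts freely on the diagram
    (P : G →* (H ≃ₗ[ℂ] H))
    (hP : ∀ (g : G) (i : I), P g (α i) = α (g • i))
    (hconj : ∀ (g : G) (i : I), P g * s i * (P g)⁻¹ = s (g • i))
    -- `w0 j` is the longest element of the parabolic subgroup `Ŵⱼ = ⟨s i : i ∈ j⟩`:
    (w0 : Quotient (MulAction.orbitRel G I) → (H ≃ₗ[ℂ] H))
    (hw0 : ∀ j : Quotient (MulAction.orbitRel G I),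
      w0 j ∈ Subgroup.closure
          {x | ∃ i : I, Quotient.mk (MulAction.orbitRel G I) i = j ∧ x = s i} ∧
      ∀ u ∈ Subgroup.closure
          {x | ∃ i : I, Quotient.mk (MulAction.orbitRel G I) i = j ∧ x = s i},
        lengthWrt {x | ∃ i : I, Quotient.mk (MulAction.orbitRel G I) i = j ∧ x = s i} u ≤
          lengthWrt {x | ∃ i : I, Quotient.mk (MulAction.orbitRel G I) i = j ∧ x = s i} (w0 j))
    (J' : Set (Quotient (MulAction.orbitRel G I))) :
    {w : H ≃ₗ[ℂ] H |
        w ∈ Subgroup.closure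
            {x | ∃ i : I, Quotient.mk (MulAction.orbitRel G I) i ∈ J' ∧ x = s i} ∧
        ∀ g : G, P g * w * (P g)⁻¹ = w} =
      ↑(Subgroup.closure {x | ∃ j ∈ J', x = w0 j}) :=
  stmt1_general α B hBsymm hdiag hoff s hs What hWhat hfin P hP hconj w0 hw0 J'
end
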